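/- arXiv:1503.08705 — 3 statements merged into one kernel-verified Lean document; each statement's English description precedes it below -/
import Mathlib

section
/- Let E be a directed graph, R a commutative ring with unit, and let β_1, β_2, …, β_n be distinct cycles in E all based at a vertex u ∈ E^0 (i.e. s(β_i) = r(β_i) = u for all i). If every cycle based at u has an exit, then there exists a finite path γ ∈ E* with s(γ) = u such that γ* β_i γ = 0 in L_R(E) for all i = 1, 2, …, n. -/
set_option synthInstance.maxHeartbeats 1000000
set_option maxHeartbeats 1000000

/-- A directed graph `E = (E⁰, E¹, r, s)`. -/
structure DGraph : Type 1 where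
  V : Type
  E : Type
  src : E → V
  rng : E → V

namespace DGraph

/-- Generators of the Leavitt path algebra: vertices, (real) edges and ghost edges. -/
inductive LGen (G : DGraph) : Type
  | vert : G.V → LGen G
  | edge : G.E → LGen G
  | ghost : G.E → LGen G

variable (G : DGraph) (R : Type) [CommRing R]

open FreeAlgebra

/-- The defining relations of the Leavitt path algebra of `G` over `R`. -/
inductive LeavittRel : FreeAlgebra R (LGen G) → FreeAlgebra R (LGen G) → Prop
  | vert_self (v : G.V) :
      LeavittRel (ι R (.vert v) * ι R (.vert v)) (ι R (.vert v))
  | vert_ne {v w : G.V} (h : v ≠ w) :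
      LeavittRel (ι R (.vert v) * ι R (.vert w)) 0
  | src_edge (e : G.E) :
      LeavittRel (ι R (.vert (G.src e)) * ι R (.edge e)) (ι R (.edge e))
  | edge_rng (e : G.E) :
      LeavittRel (ι R (.edge e) * ι R (.vert (G.rng e))) (ι R (.edge e))
  | rng_ghost (e : G.E) :
      LeavittRel (ι R (.vert (G.rng e)) * ι R (.ghost e)) (ι R (.ghost e))
  | ghost_src (e : G.E) :
      LeavittRel (ι R (.ghost e) * ι R (.vert (G.src e))) (ι R (.ghost e))
  | ghost_edge_self (e : G.E) :
      LeavittRel (ι R (.ghost e) * ι R (.edge e)) (ι R (.vert (G.rng e)))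
  | ghost_edge_ne {e f : G.E} (h : e ≠ f) :
      LeavittRel (ι R (.ghost e) * ι R (.edge f)) 0
  | cuntz_krieger (v : G.V) (h : {e : G.E | G.src e = v}.Finite)
      (hne : {e : G.E | G.src e = v}.Nonempty) :
      LeavittRel (ι R (.vert v)) (∑ e ∈ h.toFinset, ι R (.edge e) * ι R (.ghost e))

/-- The ambient unital algebra: the quotient of the free algebra by the Leavitt relations.
The Leavitt path algebra itself is the non-unital subalgebra generated by the
generators (for graphs with finitely many vertices it is unital with unit the sum
of the vertices, but this unit differs from the unit of the ambient algebra). -/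
abbrev LeavittAmbient : Type := RingQuot (LeavittRel G R)

/-- The vertex idempotents, in the ambient algebra. -/
def av (v : G.V) : LeavittAmbient G R := RingQuot.mkAlgHom R (LeavittRel G R) (ι R (.vert v))

/-- The edge elements, in the ambient algebra. -/
def ae (e : G.E) : LeavittAmbient G R := RingQuot.mkAlgHom R (LeavittRel G R) (ι R (.edge e))

/-- The ghost edge elements, in the ambient algebra. -/
def ag (e : G.E) : LeavittAmbient G R := RingQuot.mkAlgHom R (LeavittRel G R) (ι R (.ghost e))

/-- The generating set of the Leavitt path algebra inside the ambient algebra. -/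
def genSet : Set (LeavittAmbient G R) :=
  Set.range (av G R) ∪ Set.range (ae G R) ∪ Set.range (ag G R)

/-- The Leavitt path algebra `L_R(E)`: the non-unital subalgebra of the ambient
algebra generated by the vertices, edges and ghost edges. -/
def LPA : NonUnitalSubalgebra R (LeavittAmbient G R) :=
  NonUnitalAlgebra.adjoin R (genSet G R)

/-- The vertex idempotent `v ∈ L_R(E)`. -/
def lv (v : G.V) : LPA G R :=
  ⟨av G R v, NonUnitalAlgebra.subset_adjoin R (Or.inl (Or.inl ⟨v, rfl⟩))⟩

/-- The edge element `e ∈ L_R(E)`. -/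
def le (e : G.E) : LPA G R :=
  ⟨ae G R e, NonUnitalAlgebra.subset_adjoin R (Or.inl (Or.inr ⟨e, rfl⟩))⟩

/-- The ghost edge element `e* ∈ L_R(E)`. -/
def lg (e : G.E) : LPA G R :=
  ⟨ag G R e, NonUnitalAlgebra.subset_adjoin R (Or.inr ⟨e, rfl⟩)⟩

variable {G}

/-- `IsPathFrom G u w es` means that the list of edges `es` is a path from `u` to `w`;
for the empty list this means `u = w`. -/
def IsPathFrom : G.V → G.V → List G.E → Prop
  | u, w, [] => u = w
  | u, w, e :: es => G.src e = u ∧ IsPathFrom (G.rng e) w es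

/-- `IsCycleAt G u c` means `c` is a cycle based at `u`: a path of positive
length from `u` to `u`. -/
def IsCycleAt (u : G.V) (c : List G.E) : Prop :=
  c ≠ [] ∧ IsPathFrom u u c

/-- A path (given as a list of edges) has an exit if some edge `f` of the graph has the same
source as some edge of the path, but is distinct from it. -/
def HasExit (c : List G.E) : Prop :=
  ∃ e ∈ c, ∃ f : G.E, G.src f = G.src e ∧ f ≠ e

variable (G)

/-- Product of a nonempty list of edges in `L_R(E)`. -/
def edgeProd : G.E → List G.E → LPA G R
  | e, [] => le G R e
  | e, f :: es => le G R e * edgeProd f es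

/-- The element of `L_R(E)` associated to a path: the product of the edges,
or the vertex `u` for a trivial path at `u`. -/
def pathElem (u : G.V) : List G.E → LPA G R
  | [] => lv G R u
  | e :: es => edgeProd G R e es

/-- Product of the ghost edges of a nonempty list of edges, in reverse order. -/
def ghostProd : G.E → List G.E → LPA G R
  | e, [] => lg G R e
  | e, f :: es => ghostProd f es * lg G R e

/-- The element `γ*` of `L_R(E)` associated to a path `γ`: the product of the ghost
edges in reverse order, or the vertex `u` for a trivial path at `u`. -/
def ghostElem (u : G.V) : List G.E → LPA G R
  | [] => lv G R u
  | e :: es => ghostProd G R e es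

/-- `cpow x n = x ^ (n + 1)`, the (n+1)-st power in the non-unital algebra `L_R(E)`. -/
def cpow (x : LPA G R) : ℕ → LPA G R
  | 0 => x
  | n + 1 => x * cpow x n

/-- For a polynomial `q(z) = Σ_{n} r_n z^n`, a vertex idempotent `p` and an element `x`,
`polyCyc G R q p x = r_0 • p + Σ_{n ≥ 1} r_n • x ^ n`.  This is the element `q(α)` when
`p` is the base vertex of a cycle `α` with `x` the corresponding element. -/
noncomputable def polyCyc (q : Polynomial R) (p x : LPA G R) : LPA G R :=
  q.sum fun n r => r • (if n = 0 then p else cpow G R x (n - 1))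

end DGraph

/-!
For paths `γ`, `δ` with `|γ| ≤ |δ|` one has `γ* δ = 0` in `L_R(E)` unless `γ` is a prefix
of `δ`. So `γ* β γ = γ* (β γ)` vanishes as soon as `γ` is not a prefix of `β γ`, that is, not a
prefix of the periodic word `β β β ⋯`. Let `t` be the periodic word of one of the cycles.
As there are only finitely many periodic words `β_i β_i ⋯`, beyond some length `D` each of
them either equals `t` or has already diverged from it. Following `t` beyond `D` up to an
edge `e` of the cycle that has an exit `f`, and leaving along `f`, gives a path that is a
prefix of none of them.
-/

open Filter

namespace Stream'

variable {α : Type*}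

theorem take_length_mul_add_of_eq_append {l : List α} {s : Stream' α} (hs : s = l ++ₛ s)
    (N k : ℕ) : s.take (l.length * N + k) = (List.replicate N l).flatten ++ s.take k := by
  induction N with
  | zero => simp
  | succ N ih =>
    rw [List.replicate_succ, List.flatten_cons, List.append_assoc, ← ih,
      show l.length * (N + 1) + k = l.length + (l.length * N + k) by ring, append_take, ← hs]

theorem get_length_mul_add_of_eq_append {l : List α} {s : Stream' α} (hs : s = l ++ₛ s)
    (N k : ℕ) : s.get (l.length * N + k) = s.get k := by
  induction N with
  | zero => simp
  | succ N ih =>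
    rw [show l.length * (N + 1) + k = l.length + (l.length * N + k) by ring, hs,
      get_append_right, ← hs, ih]

theorem take_length_eq_of_prefix_append {l γ : List α} {s : Stream' α} (hl : l ≠ [])
    (hs : s = l ++ₛ s) (hγ : γ <+: l ++ γ) : s.take γ.length = γ := by
  induction h : γ.length using Nat.strong_induction_on generalizing γ with
  | _ n ih =>
    subst h
    rcases le_or_gt γ.length l.length with hle | hlt
    · have hγl : γ <+: l := List.prefix_of_prefix_length_le hγ (List.prefix_append l γ) hle
      rw [hs, take_append_of_le_length (h := hle), ← List.prefix_iff_eq_take.mp hγl]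
    · obtain ⟨γ', rfl⟩ : l <+: γ :=
        List.prefix_of_prefix_length_le (List.prefix_append l γ) hγ hlt.le
      have hlen : γ'.length < (l ++ γ').length := by
        simpa [List.length_pos_iff] using hl
      rw [List.length_append, hs, ← append_take,
        ih _ hlen (List.prefix_append_right_inj l |>.mp hγ) rfl]

theorem eventually_forall_take_ne_take {ι : Type*} [Finite ι] (s : ι → Stream' α) (t : Stream' α) :
    ∀ᶠ D in atTop, ∀ i, s i ≠ t → (s i).take D ≠ t.take D := by
  refine eventually_all.2 fun i => ?_
  by_cases hi : s i = t
  · simp [hi]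
  obtain ⟨n, hn⟩ : ∃ n, (s i).take n ≠ t.take n := by
    by_contra! h
    exact hi (take_theorem _ _ h)
  filter_upwards [eventually_ge_atTop n] with D hD _ hD'
  apply hn
  rw [← min_eq_right hD, ← take_take, hD', take_take]

end Stream'

namespace List

variable {α : Type*}

theorem exists_forall_not_prefix_append_self {ι : Type*} [Finite ι] (β : ι → List α)
    (hβ : ∀ i, β i ≠ []) {b : List α} {m : ℕ} (hm : m < b.length) {f : α} (hf : f ≠ b[m]) :
    ∃ N, ∀ i, ¬ (replicate N b).flatten ++ b.take m ++ [f] <+: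
      β i ++ ((replicate N b).flatten ++ b.take m ++ [f]) := by
  have hb : b ≠ [] := ne_nil_of_length_pos (by omega)
  set t := Stream'.cycle b hb
  have ht : t = b ++ₛ t := Stream'.cycle_eq b hb
  obtain ⟨D, hD⟩ := (Stream'.eventually_forall_take_ne_take
    (fun i => Stream'.cycle (β i) (hβ i)) t).exists_forall_of_atTop
  refine ⟨D, fun i hpre => ?_⟩
  have ht_take : t.take (b.length * D + m) = (replicate D b).flatten ++ b.take m := by
    rw [Stream'.take_length_mul_add_of_eq_append ht, ht,
      Stream'.take_append_of_le_length (h := hm.le)]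
  have ht_get : t.get (b.length * D + m) = b[m] := by
    rw [Stream'.get_length_mul_add_of_eq_append ht, ht, Stream'.get_append_left]
  rw [← ht_take] at hpre
  have hc := Stream'.take_length_eq_of_prefix_append (hβ i) (Stream'.cycle_eq _ (hβ i)) hpre
  rw [length_append, Stream'.length_take, length_singleton, Stream'.take_succ'] at hc
  obtain ⟨hc_take, hc_get⟩ := append_inj' hc rfl
  by_cases hct : Stream'.cycle (β i) (hβ i) = t
  · rw [hct, ht_get, singleton_inj] at hc_get
    exact hf hc_get.symm
  · exact hD _ (by nlinarith) i hct hc_take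

end List

namespace DGraph

variable {G : DGraph}

theorem IsPathFrom.append {v w x : G.V} {l₁ l₂ : List G.E} (h₁ : IsPathFrom v w l₁)
    (h₂ : IsPathFrom w x l₂) : IsPathFrom v x (l₁ ++ l₂) := by
  induction l₁ generalizing v with
  | nil => exact (show v = w from h₁) ▸ h₂
  | cons e es ih => exact ⟨h₁.1, ih h₁.2⟩

theorem IsPathFrom.flatten_replicate {u : G.V} {l : List G.E} (h : IsPathFrom u u l) (N : ℕ) :
    IsPathFrom u u (List.replicate N l).flatten := by
  induction N with
  | zero => exact rfl
  | succ N ih => exact h.append ih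

theorem IsPathFrom.take {v w : G.V} {l : List G.E} (h : IsPathFrom v w l) {m : ℕ}
    (hm : m < l.length) : IsPathFrom v (G.src l[m]) (l.take m) := by
  induction l generalizing v m with
  | nil => simp at hm
  | cons e es ih =>
    cases m with
    | zero => exact h.1.symm
    | succ m => exact ⟨h.1, ih h.2 (by simpa using hm)⟩

variable (R : Type) [CommRing R]

theorem lg_mul_le_self (e : G.E) : lg G R e * le G R e = lv G R (G.rng e) :=
  Subtype.ext <| (map_mul _ _ _).symm.trans <|
    RingQuot.mkAlgHom_rel R (LeavittRel.ghost_edge_self e)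

theorem lg_mul_le_eq_zero_of_ne {e f : G.E} (h : e ≠ f) : lg G R e * le G R f = 0 :=
  Subtype.ext <| (map_mul _ _ _).symm.trans <|
    (RingQuot.mkAlgHom_rel R (LeavittRel.ghost_edge_ne h)).trans (map_zero _)

theorem lv_src_mul_le (e : G.E) : lv G R (G.src e) * le G R e = le G R e :=
  Subtype.ext <| (map_mul _ _ _).symm.trans <|
    RingQuot.mkAlgHom_rel R (LeavittRel.src_edge e)

theorem edgeProd_mul_edgeProd (y z : G.E) (bs cs : List G.E) :
    edgeProd G R y bs * edgeProd G R z cs = edgeProd G R y (bs ++ z :: cs) := by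
  induction bs generalizing y with
  | nil => rfl
  | cons b bs ih => exact (mul_assoc _ _ _).trans (congrArg _ (ih b))

theorem lv_src_mul_edgeProd (e : G.E) (es : List G.E) :
    lv G R (G.src e) * edgeProd G R e es = edgeProd G R e es := by
  cases es with
  | nil => exact lv_src_mul_le R e
  | cons f fs => exact (mul_assoc _ _ _).symm.trans (congrArg (· * _) (lv_src_mul_le R e))

theorem ghostProd_mul_edgeProd_eq_zero_of_ne {x y : G.E} (h : x ≠ y) (as bs : List G.E) :
    ghostProd G R x as * edgeProd G R y bs = 0 := by
  have hlg : lg G R x * edgeProd G R y bs = 0 := by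
    cases bs with
    | nil => exact lg_mul_le_eq_zero_of_ne R h
    | cons b bs => rw [edgeProd, ← mul_assoc, lg_mul_le_eq_zero_of_ne R h, zero_mul]
  cases as with
  | nil => exact hlg
  | cons a as => rw [ghostProd, mul_assoc, hlg, mul_zero]

theorem ghostProd_mul_edgeProd_eq_zero_of_not_prefix {x y : G.E} {as bs : List G.E}
    {v w : G.V} (hpath : IsPathFrom v w (y :: bs)) (hlen : as.length ≤ bs.length)
    (hpre : ¬ x :: as <+: y :: bs) : ghostProd G R x as * edgeProd G R y bs = 0 := by
  induction as generalizing x y bs v with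
  | nil =>
    exact ghostProd_mul_edgeProd_eq_zero_of_ne R (by rintro rfl; exact hpre ⟨bs, rfl⟩) [] bs
  | cons a as ih =>
    obtain rfl | hxy := eq_or_ne x y
    · obtain _ | ⟨b, bs⟩ := bs
      · simp at hlen
      calc ghostProd G R x (a :: as) * edgeProd G R x (b :: bs)
          = ghostProd G R a as * (lg G R x * le G R x) * edgeProd G R b bs := by
            simp only [ghostProd, edgeProd, mul_assoc]
        _ = ghostProd G R a as * edgeProd G R b bs := by
            rw [lg_mul_le_self, ← hpath.2.1, mul_assoc, lv_src_mul_edgeProd]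
        _ = 0 := ih hpath.2 (by simpa using hlen) fun h => hpre (List.cons_prefix_cons.2 ⟨rfl, h⟩)
    · exact ghostProd_mul_edgeProd_eq_zero_of_ne R hxy _ _

theorem pathElem_mul_pathElem {u : G.V} {β γ : List G.E} (hβ : β ≠ []) (hγ : γ ≠ []) :
    pathElem G R u β * pathElem G R u γ = pathElem G R u (β ++ γ) := by
  obtain ⟨y, bs, rfl⟩ := List.exists_cons_of_ne_nil hβ
  obtain ⟨z, cs, rfl⟩ := List.exists_cons_of_ne_nil hγ
  exact edgeProd_mul_edgeProd R y z bs cs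

theorem ghostElem_mul_pathElem_eq_zero_of_not_prefix {u v w : G.V} {γ δ : List G.E}
    (hγ : γ ≠ []) (hδ : IsPathFrom v w δ) (hlen : γ.length ≤ δ.length) (hpre : ¬ γ <+: δ) :
    ghostElem G R u γ * pathElem G R u δ = 0 := by
  obtain ⟨x, as, rfl⟩ := List.exists_cons_of_ne_nil hγ
  obtain _ | ⟨y, bs⟩ := δ
  · simp at hlen
  · exact ghostProd_mul_edgeProd_eq_zero_of_not_prefix R hδ (by simpa using hlen) hpre

end DGraph

open DGraph

theorem exists_killing_path_general
    (G : DGraph) (R : Type) [CommRing R]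
    (u : G.V) (n : ℕ) (β : Fin n → List G.E)
    (hβ : ∀ i, IsCycleAt u (β i))
    (hexit : ∀ c : List G.E, IsCycleAt u c → HasExit c) :
    ∃ (w : G.V) (γ : List G.E), IsPathFrom u w γ ∧
      ∀ i, ghostElem G R u γ * pathElem G R u (β i) * pathElem G R u γ = 0 := by
  obtain _ | n := n
  · exact ⟨u, [], rfl, fun i => i.elim0⟩
  obtain ⟨e, he, f, hfe, hf⟩ := hexit (β 0) (hβ 0)
  obtain ⟨m, hm, rfl⟩ := List.getElem_of_mem he
  obtain ⟨N, hN⟩ := List.exists_forall_not_prefix_append_self β (fun i => (hβ i).1) hm hf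
  set γ := (List.replicate N (β 0)).flatten ++ (β 0).take m ++ [f]
  have hγ : IsPathFrom u (G.rng f) γ :=
    (((hβ 0).2.flatten_replicate N).append ((hβ 0).2.take hm)).append ⟨hfe, rfl⟩
  refine ⟨_, γ, hγ, fun i => ?_⟩
  rw [mul_assoc, pathElem_mul_pathElem R (hβ i).1 (by simp [γ])]
  exact ghostElem_mul_pathElem_eq_zero_of_not_prefix R (by simp [γ]) ((hβ i).2.append hγ)
    (by simp) (hN i)

/-- Let `β_1, …, β_n` be distinct cycles all based at a vertex `u`.  If every cycle based
at `u` has an exit, then there is a finite path `γ` with source `u` such that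
`γ* β_i γ = 0` in `L_R(E)` for all `i`. -/
theorem exists_killing_path
    (G : DGraph) (R : Type) [CommRing R]
    (u : G.V) (n : ℕ) (β : Fin n → List G.E)
    (hβ : ∀ i, IsCycleAt u (β i))
    (hdist : Function.Injective β)
    (hexit : ∀ c : List G.E, IsCycleAt u c → HasExit c) :
    ∃ (w : G.V) (γ : List G.E), IsPathFrom u w γ ∧
      ∀ i, ghostElem G R u γ * pathElem G R u (β i) * pathElem G R u γ = 0 :=
  exists_killing_path_general G R u n β hβ hexit
end

section
/- Let R be a commutative ring with unit. The element u = aaa* + aba*b* + bb*b* of L_{2,R} is a unitary (u*u = uu* = 1) with full spectrum: for every nonzero polynomial q ∈ R[x], the element q(u) ∈ L_{2,R} is nonzero. In particular, L_{2,R} contains a full spectrum unitary. -/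
set_option synthInstance.maxHeartbeats 1000000
set_option maxHeartbeats 1000000

/-- The four generators `a, a*, b, b*` of the Leavitt algebra `L_{2,R}`. -/
inductive L2Gen : Type
  | a : L2Gen
  | astar : L2Gen
  | b : L2Gen
  | bstar : L2Gen

open FreeAlgebra

/-- The defining relations of `L_{2,R}`: `a*a = b*b = 1 = aa* + bb*`. -/
inductive L2Rel (R : Type) [CommRing R] : FreeAlgebra R L2Gen → FreeAlgebra R L2Gen → Prop
  | a_adj : L2Rel R (ι R .astar * ι R .a) 1
  | b_adj : L2Rel R (ι R .bstar * ι R .b) 1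
  | ck : L2Rel R (ι R .a * ι R .astar + ι R .b * ι R .bstar) 1

/-- The Leavitt algebra `L_{2,R}`: the universal unital `R`-algebra generated by
`a, a*, b, b*` subject to `a*a = b*b = 1 = aa* + bb*`. -/
abbrev L2 (R : Type) [CommRing R] : Type := RingQuot (L2Rel R)

variable (R : Type) [CommRing R]

/-- The generator `a` of `L_{2,R}`. -/
def La : L2 R := RingQuot.mkAlgHom R (L2Rel R) (ι R .a)

/-- The generator `b` of `L_{2,R}`. -/
def Lb : L2 R := RingQuot.mkAlgHom R (L2Rel R) (ι R .b)

/-- The generator `a*` of `L_{2,R}`. -/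
def Lastar : L2 R := RingQuot.mkAlgHom R (L2Rel R) (ι R .astar)

/-- The generator `b*` of `L_{2,R}`. -/
def Lbstar : L2 R := RingQuot.mkAlgHom R (L2Rel R) (ι R .bstar)

namespace L2

/-- The involution on the generators. -/
def starGen : L2Gen → L2Gen
  | .a => .astar
  | .astar => .a
  | .b => .bstar
  | .bstar => .b

/-- The auxiliary algebra homomorphism `L_{2,R} → L_{2,R}ᵐᵒᵖ` implementing the involution. -/
noncomputable def starMapAux : L2 R →ₐ[R] (L2 R)ᵐᵒᵖ :=
  RingQuot.liftAlgHom R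
    ⟨FreeAlgebra.lift R fun g =>
      MulOpposite.op (RingQuot.mkAlgHom R (L2Rel R) (ι R (starGen g))), by
      intro x y h
      induction h with
      | a_adj =>
          rw [map_one, map_mul, FreeAlgebra.lift_ι_apply, FreeAlgebra.lift_ι_apply,
            ← MulOpposite.op_mul, ← map_mul]
          simp only [starGen]
          rw [RingQuot.mkAlgHom_rel R L2Rel.a_adj, map_one, MulOpposite.op_one]
      | b_adj =>
          rw [map_one, map_mul, FreeAlgebra.lift_ι_apply, FreeAlgebra.lift_ι_apply,
            ← MulOpposite.op_mul, ← map_mul]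
          simp only [starGen]
          rw [RingQuot.mkAlgHom_rel R L2Rel.b_adj, map_one, MulOpposite.op_one]
      | ck =>
          rw [map_one, map_add, map_mul, map_mul, FreeAlgebra.lift_ι_apply,
            FreeAlgebra.lift_ι_apply, FreeAlgebra.lift_ι_apply, FreeAlgebra.lift_ι_apply,
            ← MulOpposite.op_mul, ← MulOpposite.op_mul, ← MulOpposite.op_add,
            ← map_mul, ← map_mul, ← map_add]
          simp only [starGen]
          rw [RingQuot.mkAlgHom_rel R L2Rel.ck, map_one, MulOpposite.op_one]⟩

lemma starMapAux_mk (x : FreeAlgebra R L2Gen) :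
    starMapAux R (RingQuot.mkAlgHom R (L2Rel R) x) =
      FreeAlgebra.lift R (fun g =>
        MulOpposite.op (RingQuot.mkAlgHom R (L2Rel R) (ι R (starGen g)))) x := by
  simp [starMapAux, RingQuot.liftAlgHom_mkAlgHom_apply]

lemma starMapAux_gen (g : L2Gen) :
    starMapAux R (RingQuot.mkAlgHom R (L2Rel R) (ι R g)) =
      MulOpposite.op (RingQuot.mkAlgHom R (L2Rel R) (ι R (starGen g))) := by
  rw [starMapAux_mk, FreeAlgebra.lift_ι_apply]

lemma starMapAux_starMapAux (x : L2 R) :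
    (starMapAux R ((starMapAux R x).unop)).unop = x := by
  obtain ⟨y, rfl⟩ := RingQuot.mkAlgHom_surjective R (L2Rel R) x
  induction y using FreeAlgebra.induction with
  | grade0 r =>
      simp only [AlgHom.commutes, MulOpposite.algebraMap_apply, MulOpposite.unop_op]
  | grade1 g =>
      rw [starMapAux_gen, MulOpposite.unop_op, starMapAux_gen, MulOpposite.unop_op]
      cases g <;> rfl
  | mul x y ihx ihy =>
      rw [map_mul, map_mul, MulOpposite.unop_mul, map_mul, MulOpposite.unop_mul, ihx, ihy]
  | add x y ihx ihy =>
      rw [map_add, map_add, MulOpposite.unop_add, map_add, MulOpposite.unop_add, ihx, ihy]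

/-- The involution making `L_{2,R}` a `*`-algebra; it fixes `R`, and exchanges
`a ↔ a*` and `b ↔ b*`. -/
noncomputable instance instStarRing : StarRing (L2 R) where
  star x := (starMapAux R x).unop
  star_involutive x := starMapAux_starMapAux R x
  star_mul x y := by
    show (starMapAux R (x * y)).unop = (starMapAux R y).unop * (starMapAux R x).unop
    rw [map_mul, MulOpposite.unop_mul]
  star_add x y := by
    show (starMapAux R (x + y)).unop = (starMapAux R x).unop + (starMapAux R y).unop
    rw [map_add, MulOpposite.unop_add]

lemma star_def (x : L2 R) : star x = (starMapAux R x).unop := rfl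

@[simp] lemma star_La : star (La R) = Lastar R := by
  rw [star_def, La, Lastar, starMapAux_gen, MulOpposite.unop_op]; rfl

@[simp] lemma star_Lb : star (Lb R) = Lbstar R := by
  rw [star_def, Lb, Lbstar, starMapAux_gen, MulOpposite.unop_op]; rfl

@[simp] lemma star_Lastar : star (Lastar R) = La R := by
  rw [star_def, La, Lastar, starMapAux_gen, MulOpposite.unop_op]; rfl

@[simp] lemma star_Lbstar : star (Lbstar R) = Lb R := by
  rw [star_def, Lb, Lbstar, starMapAux_gen, MulOpposite.unop_op]; rfl

/-- The involution on `L_{2,R}` is `R`-linear. -/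
lemma star_smul' (r : R) (x : L2 R) : star (r • x) = r • star x := by
  show (starMapAux R (r • x)).unop = r • (starMapAux R x).unop
  rw [map_smul, MulOpposite.unop_smul]

/-- The defining relations hold in `L_{2,R}`. -/
lemma astar_a : star (La R) * La R = 1 := by
  rw [star_La, Lastar, La, ← map_mul, RingQuot.mkAlgHom_rel R L2Rel.a_adj, map_one]

lemma bstar_b : star (Lb R) * Lb R = 1 := by
  rw [star_Lb, Lbstar, Lb, ← map_mul, RingQuot.mkAlgHom_rel R L2Rel.b_adj, map_one]

lemma ck_rel : La R * star (La R) + Lb R * star (Lb R) = 1 := by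
  rw [star_La, star_Lb, La, Lastar, Lb, Lbstar, ← map_mul, ← map_mul, ← map_add,
    RingQuot.mkAlgHom_rel R L2Rel.ck, map_one]

end L2

open L2

/-!
Write `u = Σᵢ vᵢ wᵢ*` with `v = (aa, ab, b)` and `w = (a, ba, bb)`. Both families consist of
isometries with pairwise orthogonal ranges whose range projections sum to `1`, which makes `u`
unitary. Since `u a = a a`, we get `q(u) a = a q(a)`, and `a` is left invertible, so `q(u) = 0`
forces `q(a) = 0`. Finally `a` has full spectrum: on the free `R`-module with basis `(eₙ)ₙ∈ℕ`,
`a eₙ = e₂ₙ`, `b eₙ = e₂ₙ₊₁` define a representation of `L_{2,R}`, and the coefficient of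
`q(a) e₁` at `e_{2^k}` is the `k`-th coefficient of `q`.
-/

open Polynomial

section Semiconj

variable {K A : Type*} [CommSemiring K] [Semiring A] [Algebra K A]

theorem SemiconjBy.aeval_right {c x y : A} (h : SemiconjBy c y x) (q : K[X]) :
    SemiconjBy c (aeval y q) (aeval x q) := by
  induction q using Polynomial.induction_on' with
  | add p q hp hq => simpa only [map_add] using hp.add_right hq
  | monomial n r =>
      simp only [aeval_monomial]
      exact SemiconjBy.mul_right (Algebra.commute_algebraMap_right r c) (h.pow_right n)

theorem aeval_ne_zero_of_semiconjBy {c d x y : A} (hc : d * c = 1) (h : SemiconjBy c y x)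
    {q : K[X]} (hy : aeval y q ≠ 0) : aeval x q ≠ 0 := by
  intro hx
  apply hy
  calc aeval y q = d * (c * aeval y q) := by rw [← mul_assoc, hc, one_mul]
    _ = 0 := by rw [(h.aeval_right q).eq, hx, zero_mul, mul_zero]

end Semiconj

namespace Finsupp

variable {K M β : Type*} [CommSemiring K] [AddCommMonoid M] [Module K M]

theorem lcomapDomain_mul_lmapDomain {f : β → β} (hf : f.Injective) :
    (lcomapDomain f hf : Module.End K (β →₀ M)) * lmapDomain M K f = 1 :=
  LinearMap.ext (comapDomain_mapDomain f hf)

theorem lmapDomain_mul_lcomapDomain_add {f g : β → β} (hf : f.Injective) (hg : g.Injective)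
    (hfg : IsCompl (Set.range f) (Set.range g)) :
    (lmapDomain M K f * lcomapDomain f hf + lmapDomain M K g * lcomapDomain g hg :
      Module.End K (β →₀ M)) = 1 := by
  refine LinearMap.ext fun x ↦ Finsupp.ext fun n ↦ ?_
  simp only [LinearMap.add_apply, Module.End.mul_apply, Module.End.one_apply, lmapDomain_apply,
    lcomapDomain_apply, coe_add, Pi.add_apply]
  by_cases hn : n ∈ Set.range f
  · obtain ⟨m, rfl⟩ := hn
    rw [mapDomain_apply hf, comapDomain_apply,
      mapDomain_of_notMem_range _ _ (hfg.disjoint.notMem_of_mem_left (Set.mem_range_self m)),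
      add_zero]
  · obtain ⟨m, rfl⟩ : n ∈ Set.range g := hfg.compl_eq ▸ hn
    rw [mapDomain_apply hg, comapDomain_apply, mapDomain_of_notMem_range _ _ hn, zero_add]

theorem lmapDomain_pow_single (f : β → β) (k : ℕ) (x : β) (m : M) :
    (lmapDomain M K f ^ k) (single x m) = single (f^[k] x) m := by
  induction k with
  | zero => rfl
  | succ k ih =>
    rw [pow_succ', Module.End.mul_apply, ih, lmapDomain_apply, mapDomain_single,
      Function.iterate_succ_apply']

theorem aeval_lmapDomain_single_apply {f : β → β} {x : β} (hx : (fun k ↦ f^[k] x).Injective)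
    (q : K[X]) (n : ℕ) : aeval (lmapDomain K K f) q (single x 1) (f^[n] x) = q.coeff n := by
  induction q using Polynomial.induction_on' with
  | add p q hp hq =>
    simp only [map_add, LinearMap.add_apply, coe_add, Pi.add_apply, hp, hq, coeff_add]
  | monomial k r =>
    rw [aeval_monomial, Module.End.mul_apply, lmapDomain_pow_single, Module.algebraMap_end_apply,
      smul_single_one, single_apply_left hx, single_apply, coeff_monomial]

theorem aeval_lmapDomain_ne_zero {f : β → β} {x : β} (hx : (fun k ↦ f^[k] x).Injective)
    {q : K[X]} (hq : q ≠ 0) : aeval (lmapDomain K K f) q ≠ 0 := by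
  intro h
  refine hq (Polynomial.ext fun n ↦ ?_)
  rw [← aeval_lmapDomain_single_apply hx, h, coeff_zero]
  rfl

end Finsupp

theorem Nat.isCompl_range_two_mul_range_two_mul_add_one :
    IsCompl (Set.range (2 * ·)) (Set.range (2 * · + 1)) := by
  constructor
  · exact Set.disjoint_left.mpr <| by rintro _ ⟨m, rfl⟩ ⟨k, hk⟩; simp only at hk; omega
  · refine codisjoint_iff.mpr <| Set.eq_univ_of_forall fun n ↦ ?_
    obtain ⟨m, rfl | rfl⟩ := Nat.even_or_odd' n
    exacts [Or.inl ⟨m, rfl⟩, Or.inr ⟨m, rfl⟩]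

theorem mul_eq_zero_of_mul_add_mul_eq_one {A : Type*} [Ring A] {a a' b b' : A}
    (ha : a' * a = 1) (hb : b' * b = 1) (h : a * a' + b * b' = 1) : a' * b = 0 := by
  have : a' * b + a' * b = a' * b :=
    calc a' * b + a' * b = (a' * a) * (a' * b) + (a' * b) * (b' * b) := by
          rw [ha, hb, one_mul, mul_one]
      _ = a' * (a * a' + b * b') * b := by noncomm_ring
      _ = a' * b := by rw [h, mul_one]
  exact add_eq_right.mp this

theorem sum_mul_star_mem_unitary {A ι : Type*} [Ring A] [StarRing A] [Fintype ι] [DecidableEq ι]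
    {v w : ι → A} (hv : ∀ i j, star (v i) * v j = if i = j then 1 else 0)
    (hw : ∀ i j, star (w i) * w j = if i = j then 1 else 0)
    (hv₁ : ∑ i, v i * star (v i) = 1) (hw₁ : ∑ i, w i * star (w i) = 1) :
    ∑ i, v i * star (w i) ∈ unitary A := by
  rw [Unitary.mem_iff, star_sum]
  simp only [star_mul, star_star, Finset.sum_mul_sum]
  constructor
  · simp_rw [mul_assoc, ← mul_assoc (star (v _)), hv]
    simpa using hw₁
  · simp_rw [mul_assoc, ← mul_assoc (star (w _)), hw]
    simpa using hv₁

namespace L2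

noncomputable def lift {B : Type*} [Ring B] [Algebra R B] (a b a' b' : B) (ha : a' * a = 1)
    (hb : b' * b = 1) (h : a * a' + b * b' = 1) : L2 R →ₐ[R] B :=
  RingQuot.liftAlgHom R
    ⟨FreeAlgebra.lift R fun | .a => a | .astar => a' | .b => b | .bstar => b', by
      rintro _ _ ⟨⟩ <;> simpa⟩

theorem lift_La {B : Type*} [Ring B] [Algebra R B] (a b a' b' : B) (ha : a' * a = 1)
    (hb : b' * b = 1) (h : a * a' + b * b' = 1) : lift R a b a' b' ha hb h (La R) = a := by
  simp [lift, La]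

theorem aeval_La_ne_zero {q : R[X]} (hq : q ≠ 0) : aeval (La R) q ≠ 0 := by
  have hf : Function.Injective (2 * · : ℕ → ℕ) := mul_right_injective₀ two_ne_zero
  have hg : Function.Injective (2 * · + 1 : ℕ → ℕ) := fun m n h ↦ by simp only at h; omega
  have horbit : Function.Injective fun k ↦ (2 * · : ℕ → ℕ)^[k] 1 := by
    simpa only [mul_left_iterate_apply_one] using Nat.pow_right_injective le_rfl
  have hrel := Finsupp.lmapDomain_mul_lcomapDomain_add (M := R) (K := R) hf hg
    Nat.isCompl_range_two_mul_range_two_mul_add_one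
  have hρ := lift_La R (B := Module.End R (ℕ →₀ R)) _ _ _ _
    (Finsupp.lcomapDomain_mul_lmapDomain hf) (Finsupp.lcomapDomain_mul_lmapDomain hg) hrel
  intro h
  refine Finsupp.aeval_lmapDomain_ne_zero horbit hq ?_
  rw [← hρ, aeval_algHom_apply, h, map_zero]

theorem star_La_mul_Lb : star (La R) * Lb R = 0 :=
  mul_eq_zero_of_mul_add_mul_eq_one (astar_a R) (bstar_b R) (ck_rel R)

theorem star_Lb_mul_La : star (Lb R) * La R = 0 :=
  mul_eq_zero_of_mul_add_mul_eq_one (bstar_b R) (astar_a R) (by rw [add_comm, ck_rel])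

noncomputable def u : L2 R :=
  La R * La R * star (La R) + La R * Lb R * star (La R) * star (Lb R) +
    Lb R * star (Lb R) * star (Lb R)

theorem u_mem_unitary : u R ∈ unitary (L2 R) := by
  have haa (x : L2 R) : star (La R) * (La R * x) = x := by rw [← mul_assoc, astar_a, one_mul]
  have hbb (x : L2 R) : star (Lb R) * (Lb R * x) = x := by rw [← mul_assoc, bstar_b, one_mul]
  have hab (x : L2 R) : star (La R) * (Lb R * x) = 0 := by
    rw [← mul_assoc, star_La_mul_Lb, zero_mul]
  have hba (x : L2 R) : star (Lb R) * (La R * x) = 0 := by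
    rw [← mul_assoc, star_Lb_mul_La, zero_mul]
  have := sum_mul_star_mem_unitary (v := ![La R * La R, La R * Lb R, Lb R])
    (w := ![La R, Lb R * La R, Lb R * Lb R]) ?orthoV ?orthoW ?sumV ?sumW
  case orthoV | orthoW =>
    intro i j
    fin_cases i <;> fin_cases j <;>
      simp [star_mul, mul_assoc, haa, hbb, hab, hba, astar_a, bstar_b, star_La_mul_Lb,
        star_Lb_mul_La, -star_La, -star_Lb]
  case sumV =>
    calc _ = La R * (La R * star (La R) + Lb R * star (Lb R)) * star (La R) +
          Lb R * star (Lb R) := by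
          simp only [Fin.sum_univ_three, Matrix.cons_val, star_mul]; noncomm_ring
      _ = 1 := by rw [ck_rel, mul_one, ck_rel]
  case sumW =>
    calc _ = La R * star (La R) +
          Lb R * (La R * star (La R) + Lb R * star (Lb R)) * star (Lb R) := by
          simp only [Fin.sum_univ_three, Matrix.cons_val, star_mul]; noncomm_ring
      _ = 1 := by rw [ck_rel, mul_one, ck_rel]
  convert this using 1
  simp [u, Fin.sum_univ_three, mul_assoc]

theorem u_mul_La : u R * La R = La R * La R := by
  simp only [u, add_mul, mul_assoc, astar_a, star_Lb_mul_La, mul_one, mul_zero, add_zero]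

end L2

/-- The element `u = aaa* + aba*b* + bb*b*` of `L_{2,R}` is a unitary with full spectrum:
`q(u) ≠ 0` for every nonzero polynomial `q ∈ R[x]`.  In particular `L_{2,R}` contains a
full spectrum unitary. -/
theorem full_spectrum_unitary
    (R : Type) [CommRing R] :
    (star (La R * La R * star (La R) + La R * Lb R * star (La R) * star (Lb R) +
          Lb R * star (Lb R) * star (Lb R)) *
        (La R * La R * star (La R) + La R * Lb R * star (La R) * star (Lb R) +
          Lb R * star (Lb R) * star (Lb R)) = 1) ∧
    ((La R * La R * star (La R) + La R * Lb R * star (La R) * star (Lb R) +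
          Lb R * star (Lb R) * star (Lb R)) *
        star (La R * La R * star (La R) + La R * Lb R * star (La R) * star (Lb R) +
          Lb R * star (Lb R) * star (Lb R)) = 1) ∧
    (∀ q : Polynomial R, q ≠ 0 →
      Polynomial.aeval
        (La R * La R * star (La R) + La R * Lb R * star (La R) * star (Lb R) +
          Lb R * star (Lb R) * star (Lb R)) q ≠ 0) :=
  ⟨Unitary.star_mul_self_of_mem (u_mem_unitary R),
    Unitary.mul_star_self_of_mem (u_mem_unitary R),
    fun _ hq ↦ aeval_ne_zero_of_semiconjBy (astar_a R) (u_mul_La R).symm (aeval_La_ne_zero R hq)⟩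
end

section
/- Let R be a commutative ring with unit and let 𝒯 be the Toeplitz graph with two vertices u, v, a loop e at u, and an edge f from u to v. Then the assignment u ↦ aa*, v ↦ bb*, e ↦ aaa*, f ↦ abb* extends to a unital injective *-algebra homomorphism L_R(𝒯) → L_{2,R}. -/
set_option synthInstance.maxHeartbeats 1000000
set_option maxHeartbeats 1000000

/-- A directed graph `E = (E⁰, E¹, r, s)`. -/
structure LPGraph : Type 1 where
  V : Type
  E : Type
  src : E → V
  rng : E → V

namespace LPGraph

/-- Generators of the Leavitt path algebra: vertices, (real) edges and ghost edges. -/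
inductive LGen (G : LPGraph) : Type
  | vert : G.V → LGen G
  | edge : G.E → LGen G
  | ghost : G.E → LGen G

variable (G : LPGraph) (R : Type) [CommRing R]

open FreeAlgebra

/-- The defining relations of the Leavitt path algebra of `G` over `R`. -/
inductive LeavittRel : FreeAlgebra R (LGen G) → FreeAlgebra R (LGen G) → Prop
  | vert_self (v : G.V) :
      LeavittRel (ι R (.vert v) * ι R (.vert v)) (ι R (.vert v))
  | vert_ne {v w : G.V} (h : v ≠ w) :
      LeavittRel (ι R (.vert v) * ι R (.vert w)) 0
  | src_edge (e : G.E) :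
      LeavittRel (ι R (.vert (G.src e)) * ι R (.edge e)) (ι R (.edge e))
  | edge_rng (e : G.E) :
      LeavittRel (ι R (.edge e) * ι R (.vert (G.rng e))) (ι R (.edge e))
  | rng_ghost (e : G.E) :
      LeavittRel (ι R (.vert (G.rng e)) * ι R (.ghost e)) (ι R (.ghost e))
  | ghost_src (e : G.E) :
      LeavittRel (ι R (.ghost e) * ι R (.vert (G.src e))) (ι R (.ghost e))
  | ghost_edge_self (e : G.E) :
      LeavittRel (ι R (.ghost e) * ι R (.edge e)) (ι R (.vert (G.rng e)))
  | ghost_edge_ne {e f : G.E} (h : e ≠ f) :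
      LeavittRel (ι R (.ghost e) * ι R (.edge f)) 0
  | cuntz_krieger (v : G.V) (h : {e : G.E | G.src e = v}.Finite)
      (hne : {e : G.E | G.src e = v}.Nonempty) :
      LeavittRel (ι R (.vert v)) (∑ e ∈ h.toFinset, ι R (.edge e) * ι R (.ghost e))

/-- The ambient unital algebra: the quotient of the free algebra by the Leavitt relations.
The Leavitt path algebra itself is the non-unital subalgebra generated by the
generators (for graphs with finitely many vertices it is unital with unit the sum
of the vertices, but this unit differs from the unit of the ambient algebra). -/
abbrev LeavittAmbient : Type := RingQuot (LeavittRel G R)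

/-- The vertex idempotents, in the ambient algebra. -/
def av (v : G.V) : LeavittAmbient G R := RingQuot.mkAlgHom R (LeavittRel G R) (ι R (.vert v))

/-- The edge elements, in the ambient algebra. -/
def ae (e : G.E) : LeavittAmbient G R := RingQuot.mkAlgHom R (LeavittRel G R) (ι R (.edge e))

/-- The ghost edge elements, in the ambient algebra. -/
def ag (e : G.E) : LeavittAmbient G R := RingQuot.mkAlgHom R (LeavittRel G R) (ι R (.ghost e))

/-- The generating set of the Leavitt path algebra inside the ambient algebra. -/
def genSet : Set (LeavittAmbient G R) :=
  Set.range (av G R) ∪ Set.range (ae G R) ∪ Set.range (ag G R)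

/-- The involution on the generators: it fixes vertices and exchanges real and ghost
edges. -/
def starGen : LGen G → LGen G
  | .vert v => .vert v
  | .edge e => .ghost e
  | .ghost e => .edge e

/-- The auxiliary algebra homomorphism from the free algebra to the opposite of the
ambient algebra, implementing the involution on the generators. -/
noncomputable def preStar : FreeAlgebra R (LGen G) →ₐ[R] (LeavittAmbient G R)ᵐᵒᵖ :=
  FreeAlgebra.lift R fun g =>
    MulOpposite.op (RingQuot.mkAlgHom R (LeavittRel G R) (ι R (starGen G g)))

lemma preStar_ι (g : LGen G) :
    preStar G R (ι R g) =
      MulOpposite.op (RingQuot.mkAlgHom R (LeavittRel G R) (ι R (starGen G g))) := by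
  rw [preStar, FreeAlgebra.lift_ι_apply]

lemma preStar_mul_ι (g h : LGen G) :
    preStar G R (ι R g * ι R h) =
      MulOpposite.op (RingQuot.mkAlgHom R (LeavittRel G R)
        (ι R (starGen G h) * ι R (starGen G g))) := by
  rw [map_mul, preStar_ι, preStar_ι, ← MulOpposite.op_mul, ← map_mul]

lemma preStar_rel {x y : FreeAlgebra R (LGen G)} (h : LeavittRel G R x y) :
    preStar G R x = preStar G R y := by
  induction h with
  | vert_self v =>
      rw [preStar_mul_ι, preStar_ι]
      simp only [starGen]
      exact congrArg _ (RingQuot.mkAlgHom_rel R (LeavittRel.vert_self v))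
  | vert_ne h =>
      rw [preStar_mul_ι, map_zero]
      simp only [starGen]
      rw [RingQuot.mkAlgHom_rel R (LeavittRel.vert_ne (Ne.symm h)), map_zero,
        MulOpposite.op_zero]
  | src_edge e =>
      rw [preStar_mul_ι, preStar_ι]
      simp only [starGen]
      exact congrArg _ (RingQuot.mkAlgHom_rel R (LeavittRel.ghost_src e))
  | edge_rng e =>
      rw [preStar_mul_ι, preStar_ι]
      simp only [starGen]
      exact congrArg _ (RingQuot.mkAlgHom_rel R (LeavittRel.rng_ghost e))
  | rng_ghost e =>
      rw [preStar_mul_ι, preStar_ι]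
      simp only [starGen]
      exact congrArg _ (RingQuot.mkAlgHom_rel R (LeavittRel.edge_rng e))
  | ghost_src e =>
      rw [preStar_mul_ι, preStar_ι]
      simp only [starGen]
      exact congrArg _ (RingQuot.mkAlgHom_rel R (LeavittRel.src_edge e))
  | ghost_edge_self e =>
      rw [preStar_mul_ι, preStar_ι]
      simp only [starGen]
      exact congrArg _ (RingQuot.mkAlgHom_rel R (LeavittRel.ghost_edge_self e))
  | ghost_edge_ne h =>
      rw [preStar_mul_ι, map_zero]
      simp only [starGen]
      rw [RingQuot.mkAlgHom_rel R (LeavittRel.ghost_edge_ne (Ne.symm h)), map_zero,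
        MulOpposite.op_zero]
  | cuntz_krieger v h hne =>
      rw [preStar_ι, map_sum]
      simp only [preStar_mul_ι, starGen]
      rw [← Finset.op_sum, ← map_sum]
      exact congrArg _ (RingQuot.mkAlgHom_rel R (LeavittRel.cuntz_krieger v h hne))

/-- The auxiliary algebra homomorphism `L → Lᵐᵒᵖ` implementing the involution on the
ambient algebra. -/
noncomputable def starMapAux : LeavittAmbient G R →ₐ[R] (LeavittAmbient G R)ᵐᵒᵖ :=
  RingQuot.liftAlgHom R ⟨preStar G R, fun _ _ h => preStar_rel G R h⟩

lemma starMapAux_mk (x : FreeAlgebra R (LGen G)) :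
    starMapAux G R (RingQuot.mkAlgHom R (LeavittRel G R) x) = preStar G R x := by
  rw [starMapAux, RingQuot.liftAlgHom_mkAlgHom_apply]

lemma starMapAux_gen (g : LGen G) :
    starMapAux G R (RingQuot.mkAlgHom R (LeavittRel G R) (ι R g)) =
      MulOpposite.op (RingQuot.mkAlgHom R (LeavittRel G R) (ι R (starGen G g))) := by
  rw [starMapAux_mk, preStar_ι]

lemma starMapAux_starMapAux (x : LeavittAmbient G R) :
    (starMapAux G R ((starMapAux G R x).unop)).unop = x := by
  obtain ⟨y, rfl⟩ := RingQuot.mkAlgHom_surjective R (LeavittRel G R) x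
  induction y using FreeAlgebra.induction with
  | grade0 r =>
      simp only [AlgHom.commutes, MulOpposite.algebraMap_apply, MulOpposite.unop_op]
  | grade1 g =>
      rw [starMapAux_gen, MulOpposite.unop_op, starMapAux_gen, MulOpposite.unop_op]
      cases g <;> rfl
  | mul x y ihx ihy =>
      rw [map_mul, map_mul, MulOpposite.unop_mul, map_mul, MulOpposite.unop_mul, ihx, ihy]
  | add x y ihx ihy =>
      rw [map_add, map_add, MulOpposite.unop_add, map_add, MulOpposite.unop_add, ihx, ihy]

/-- The involution making the ambient algebra (and hence `L_R(E)`) a `*`-ring; it fixes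
the vertices and `R`, and exchanges real and ghost edges. -/
noncomputable instance instStarRing : StarRing (LeavittAmbient G R) where
  star x := (starMapAux G R x).unop
  star_involutive x := starMapAux_starMapAux G R x
  star_mul x y := by
    show (starMapAux G R (x * y)).unop =
      (starMapAux G R y).unop * (starMapAux G R x).unop
    rw [map_mul, MulOpposite.unop_mul]
  star_add x y := by
    show (starMapAux G R (x + y)).unop =
      (starMapAux G R x).unop + (starMapAux G R y).unop
    rw [map_add, MulOpposite.unop_add]

lemma star_def (x : LeavittAmbient G R) : star x = (starMapAux G R x).unop := rfl

@[simp] lemma star_av (v : G.V) : star (av G R v) = av G R v := by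
  rw [star_def, av, starMapAux_gen, MulOpposite.unop_op]; rfl

@[simp] lemma star_ae (e : G.E) : star (ae G R e) = ag G R e := by
  rw [star_def, ae, ag, starMapAux_gen, MulOpposite.unop_op]; rfl

@[simp] lemma star_ag (e : G.E) : star (ag G R e) = ae G R e := by
  rw [star_def, ae, ag, starMapAux_gen, MulOpposite.unop_op]; rfl

/-- The involution on the ambient algebra is `R`-linear. -/
lemma star_smul' (r : R) (x : LeavittAmbient G R) : star (r • x) = r • star x := by
  show (starMapAux G R (r • x)).unop = r • (starMapAux G R x).unop
  rw [map_smul, MulOpposite.unop_smul]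

/-- The Leavitt path algebra `L_R(E)`: the non-unital `*`-subalgebra of the ambient
algebra generated by the vertices, edges and ghost edges. -/
noncomputable def LPA : NonUnitalStarSubalgebra R (LeavittAmbient G R) where
  toNonUnitalSubalgebra := NonUnitalAlgebra.adjoin R (genSet G R)
  star_mem' := by
    intro a ha
    replace ha : a ∈ NonUnitalAlgebra.adjoin R (genSet G R) := ha
    show star a ∈ NonUnitalAlgebra.adjoin R (genSet G R)
    induction ha using NonUnitalAlgebra.adjoin_induction with
    | mem x hx =>
        apply NonUnitalAlgebra.subset_adjoin R
        rcases hx with (⟨v, rfl⟩ | ⟨e, rfl⟩) | ⟨e, rfl⟩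
        · rw [star_av]; exact Or.inl (Or.inl ⟨v, rfl⟩)
        · rw [star_ae]; exact Or.inr ⟨e, rfl⟩
        · rw [star_ag]; exact Or.inl (Or.inr ⟨e, rfl⟩)
    | add x y hx hy ihx ihy => rw [star_add]; exact add_mem ihx ihy
    | zero => rw [star_zero]; exact zero_mem _
    | mul x y hx hy ihx ihy => rw [star_mul]; exact mul_mem ihy ihx
    | smul r x hx ih => rw [star_smul']; exact SMulMemClass.smul_mem r ih

/-- The vertex idempotent `v ∈ L_R(E)`. -/
def lv (v : G.V) : LPA G R :=
  ⟨av G R v, NonUnitalAlgebra.subset_adjoin R (Or.inl (Or.inl ⟨v, rfl⟩))⟩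

/-- The edge element `e ∈ L_R(E)`. -/
def le (e : G.E) : LPA G R :=
  ⟨ae G R e, NonUnitalAlgebra.subset_adjoin R (Or.inl (Or.inr ⟨e, rfl⟩))⟩

/-- The ghost edge element `e* ∈ L_R(E)`. -/
def lg (e : G.E) : LPA G R :=
  ⟨ag G R e, NonUnitalAlgebra.subset_adjoin R (Or.inr ⟨e, rfl⟩)⟩

variable {G}

/-- `IsPathFrom G u w es` means that the list of edges `es` is a path from `u` to `w`;
for the empty list this means `u = w`. -/
def IsPathFrom : G.V → G.V → List G.E → Prop
  | u, w, [] => u = w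
  | u, w, e :: es => G.src e = u ∧ IsPathFrom (G.rng e) w es

/-- `IsCycleAt G u c` means `c` is a cycle based at `u`: a path of positive
length from `u` to `u`. -/
def IsCycleAt (u : G.V) (c : List G.E) : Prop :=
  c ≠ [] ∧ IsPathFrom u u c

/-- A path (given as a list of edges) has an exit if some edge `f` of the graph has the same
source as some edge of the path, but is distinct from it. -/
def HasExit (c : List G.E) : Prop :=
  ∃ e ∈ c, ∃ f : G.E, G.src f = G.src e ∧ f ≠ e

variable (G)

/-- Product of a nonempty list of edges in `L_R(E)`. -/
noncomputable def edgeProd : G.E → List G.E → LPA G R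
  | e, [] => le G R e
  | e, f :: es => le G R e * edgeProd f es

/-- The element of `L_R(E)` associated to a path: the product of the edges,
or the vertex `u` for a trivial path at `u`. -/
noncomputable def pathElem (u : G.V) : List G.E → LPA G R
  | [] => lv G R u
  | e :: es => edgeProd G R e es

/-- Product of the ghost edges of a nonempty list of edges, in reverse order. -/
noncomputable def ghostProd : G.E → List G.E → LPA G R
  | e, [] => lg G R e
  | e, f :: es => ghostProd f es * lg G R e

/-- The element `γ*` of `L_R(E)` associated to a path `γ`: the product of the ghost
edges in reverse order, or the vertex `u` for a trivial path at `u`. -/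
noncomputable def ghostElem (u : G.V) : List G.E → LPA G R
  | [] => lv G R u
  | e :: es => ghostProd G R e es

/-- `cpow x n = x ^ (n + 1)`, the (n+1)-st power in the non-unital algebra `L_R(E)`. -/
noncomputable def cpow (x : LPA G R) : ℕ → LPA G R
  | 0 => x
  | n + 1 => x * cpow x n

/-- For a polynomial `q(z) = Σ_{n} r_n z^n`, a vertex idempotent `p` and an element `x`,
`polyCyc G R q p x = r_0 • p + Σ_{n ≥ 1} r_n • x ^ n`.  This is the element `q(α)` when
`p` is the base vertex of a cycle `α` with `x` the corresponding element. -/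
noncomputable def polyCyc (q : Polynomial R) (p x : LPA G R) : LPA G R :=
  q.sum fun n r => r • (if n = 0 then p else cpow G R x (n - 1))

end LPGraph

open FreeAlgebra

variable (R : Type) [CommRing R]

open LPGraph

/-- The Toeplitz graph `𝒯`: vertices `u = false` and `v = true`, a loop `e = false` at
`u` and an edge `f = true` from `u` to `v`. -/
def toeplitzGraph : LPGraph :=
  ⟨Bool, Bool, fun _ => false, fun x => x⟩

/-!
Put `w = u + v` and `t = e + f`. In the corner ring `w L_R(𝒯) w`, whose unit is `w`, the element
`t` satisfies `t* t = w`, and `u = t t*`, `v = w - t t*`, `e = t u`, `f = t v`; hence `L_R(𝒯)` is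
spanned by the monomials `t^m t*^n`, powers taken in the corner. Conversely, any `t, s` with
`s t = 1` in an `R`-algebra give a homomorphism `u ↦ t s`, `v ↦ 1 - t s`, `e ↦ t u`, `f ↦ t v`,
sending `t^m t*^n` to `t^m s^n`; in `L_{2,R}` take `t = a`, so that `1 - a a* = b b*`. The
`a^m a*^n` are linearly independent, as the representation of `L_{2,R}` on the free module over
infinite binary sequences (`a`, `b` prepend a letter, `a*`, `b*` remove it) shows on the sequences
`0^k 1^∞`; so the homomorphism is injective on `L_R(𝒯)`.
-/

section Bicyclic

variable {M : Type*} [Monoid M] {s t : M}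

lemma pow_mul_pow_of_le (h : s * t = 1) {n p : ℕ} (hnp : n ≤ p) : s ^ n * t ^ p = t ^ (p - n) := by
  rw [← Nat.add_sub_cancel' hnp, pow_add, ← mul_assoc, pow_mul_pow_eq_one n h, one_mul,
    Nat.add_sub_cancel_left]

lemma pow_mul_pow_of_ge (h : s * t = 1) {n p : ℕ} (hpn : p ≤ n) : s ^ n * t ^ p = s ^ (n - p) := by
  rw [← Nat.sub_add_cancel hpn, pow_add, mul_assoc, pow_mul_pow_eq_one p h, mul_one,
    Nat.add_sub_cancel]

lemma mul_mem_range_pow_mul_pow (h : s * t = 1) (p q : ℕ × ℕ) :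
    t ^ p.1 * s ^ p.2 * (t ^ q.1 * s ^ q.2) ∈ Set.range fun r : ℕ × ℕ => t ^ r.1 * s ^ r.2 := by
  have hassoc : t ^ p.1 * s ^ p.2 * (t ^ q.1 * s ^ q.2) =
      t ^ p.1 * (s ^ p.2 * t ^ q.1) * s ^ q.2 := by
    simp only [mul_assoc]
  rcases le_total p.2 q.1 with hle | hge
  · refine ⟨(p.1 + (q.1 - p.2), q.2), ?_⟩
    rw [hassoc, pow_mul_pow_of_le h hle, ← pow_add]
  · refine ⟨(p.1, p.2 - q.1 + q.2), ?_⟩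
    rw [hassoc, pow_mul_pow_of_ge h hge, mul_assoc, ← pow_add]

end Bicyclic

theorem LinearIndependent.injOn_span_of_comp {ι S M N : Type*} [Semiring S] [AddCommMonoid M]
    [AddCommMonoid N] [Module S M] [Module S N] (f : M →ₗ[S] N) {v : ι → M}
    (hv : LinearIndependent S (f ∘ v)) : Set.InjOn f (Submodule.span S (Set.range v)) := by
  rw [← Finsupp.range_linearCombination]
  rintro _ ⟨c, rfl⟩ _ ⟨d, rfl⟩ h
  have hcd : Finsupp.linearCombination S (f ∘ v) c = Finsupp.linearCombination S (f ∘ v) d := by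
    simpa only [Finsupp.apply_linearCombination] using h
  rw [hv hcd]

def IsIdempotentElem.cornerMonoidHom {A B : Type*} [NonUnitalSemiring A] [Monoid B] {e : A}
    (he : IsIdempotentElem e) (f : A →ₙ* B) (hf : f e = 1) : he.Corner →* B where
  toFun x := f (Subtype.val x)
  map_one' := hf
  map_mul' _ _ := map_mul f _ _

namespace LPGraph

variable {G : LPGraph}

lemma av_mul_av_self (v : G.V) : av G R v * av G R v = av G R v := by
  rw [av, ← map_mul]; exact RingQuot.mkAlgHom_rel R (LeavittRel.vert_self v)

lemma av_mul_av_of_ne {v w : G.V} (h : v ≠ w) : av G R v * av G R w = 0 := by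
  rw [av, av, ← map_mul, RingQuot.mkAlgHom_rel R (LeavittRel.vert_ne h), map_zero]

lemma av_src_mul_ae (e : G.E) : av G R (G.src e) * ae G R e = ae G R e := by
  rw [av, ae, ← map_mul]; exact RingQuot.mkAlgHom_rel R (LeavittRel.src_edge e)

lemma ae_mul_av_rng (e : G.E) : ae G R e * av G R (G.rng e) = ae G R e := by
  rw [av, ae, ← map_mul]; exact RingQuot.mkAlgHom_rel R (LeavittRel.edge_rng e)

lemma ag_mul_ae_self (e : G.E) : ag G R e * ae G R e = av G R (G.rng e) := by
  rw [av, ae, ag, ← map_mul]; exact RingQuot.mkAlgHom_rel R (LeavittRel.ghost_edge_self e)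

lemma ag_mul_ae_of_ne {e f : G.E} (h : e ≠ f) : ag G R e * ae G R f = 0 := by
  rw [ae, ag, ← map_mul, RingQuot.mkAlgHom_rel R (LeavittRel.ghost_edge_ne h), map_zero]

lemma av_eq_sum_ae_mul_ag (v : G.V) (h : {e : G.E | G.src e = v}.Finite)
    (hne : {e : G.E | G.src e = v}.Nonempty) :
    av G R v = ∑ e ∈ h.toFinset, ae G R e * ag G R e := by
  simp only [av, ae, ag, ← map_mul, ← map_sum]
  exact RingQuot.mkAlgHom_rel R (LeavittRel.cuntz_krieger v h hne)

lemma av_mul_ae_of_ne {v : G.V} {e : G.E} (h : v ≠ G.src e) : av G R v * ae G R e = 0 := by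
  rw [← av_src_mul_ae, ← mul_assoc, av_mul_av_of_ne R h, zero_mul]

lemma ae_mul_av_of_ne {e : G.E} {v : G.V} (h : G.rng e ≠ v) : ae G R e * av G R v = 0 := by
  rw [← ae_mul_av_rng, mul_assoc, av_mul_av_of_ne R h, mul_zero]

lemma ae_mul_ag_of_ne {e f : G.E} (h : G.rng e ≠ G.rng f) : ae G R e * ag G R f = 0 := by
  rw [← ae_mul_av_rng, ← star_ae, ← ae_mul_av_rng R f, star_mul, star_av, star_ae, mul_assoc,
    ← mul_assoc (av G R _), av_mul_av_of_ne R h, zero_mul, mul_zero]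

end LPGraph

namespace L2

noncomputable def consMap (b : Bool) : Module.End R (Stream' Bool →₀ R) :=
  Finsupp.lmapDomain R R (Stream'.cons b)

noncomputable def tailMap (b : Bool) : Module.End R (Stream' Bool →₀ R) :=
  Finsupp.lsum R fun σ => if σ.head = b then Finsupp.lsingle σ.tail else 0

noncomputable def shiftRepGen : L2Gen → Module.End R (Stream' Bool →₀ R)
  | .a => consMap R false
  | .astar => tailMap R false
  | .b => consMap R true
  | .bstar => tailMap R true

def falsesThenTrues (k : ℕ) : Stream' Bool := fun i => decide (k ≤ i)

section

variable {R}

@[simp] lemma consMap_single (b : Bool) (σ : Stream' Bool) (r : R) :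
    consMap R b (Finsupp.single σ r) = Finsupp.single (Stream'.cons b σ) r := by
  simp [consMap]

lemma tailMap_single (b : Bool) (σ : Stream' Bool) (r : R) :
    tailMap R b (Finsupp.single σ r) = if σ.head = b then Finsupp.single σ.tail r else 0 := by
  rw [tailMap, Finsupp.lsum_single]
  split_ifs <;> rfl

end

lemma tailMap_mul_consMap (b : Bool) : tailMap R b * consMap R b = 1 := by
  refine Finsupp.lhom_ext fun σ r => ?_
  simp [tailMap_single, Stream'.tail_cons]

lemma consMap_mul_tailMap_add_consMap_mul_tailMap :
    consMap R false * tailMap R false + consMap R true * tailMap R true = 1 := by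
  refine Finsupp.lhom_ext fun σ r => ?_
  have hσ := Stream'.eta σ
  cases h : σ.head <;> rw [h] at hσ <;> simp [tailMap_single, h, hσ]

noncomputable def shiftRep : L2 R →ₐ[R] Module.End R (Stream' Bool →₀ R) :=
  RingQuot.liftAlgHom R ⟨FreeAlgebra.lift R (shiftRepGen R), fun _ _ h => by
    induction h <;>
      simp [shiftRepGen, tailMap_mul_consMap, consMap_mul_tailMap_add_consMap_mul_tailMap]⟩

lemma shiftRep_La : shiftRep R (La R) = consMap R false := by
  rw [shiftRep, La, RingQuot.liftAlgHom_mkAlgHom_apply, FreeAlgebra.lift_ι_apply]; rfl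

lemma shiftRep_star_La : shiftRep R (star (La R)) = tailMap R false := by
  rw [star_La, shiftRep, Lastar, RingQuot.liftAlgHom_mkAlgHom_apply, FreeAlgebra.lift_ι_apply]
  rfl

lemma falsesThenTrues_injective : Function.Injective falsesThenTrues := by
  intro k l h
  have hk := congrFun h k
  have hl := congrFun h l
  simp only [falsesThenTrues, le_refl, decide_true, true_eq_decide_iff, decide_eq_true_eq] at hk hl
  exact le_antisymm hl hk

lemma cons_false_falsesThenTrues (k : ℕ) :
    Stream'.cons false (falsesThenTrues k) = falsesThenTrues (k + 1) := by
  funext i; cases i <;> simp [falsesThenTrues, Stream'.cons]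

section

variable {R}

lemma consMap_pow_single (m k : ℕ) (r : R) :
    (consMap R false ^ m) (Finsupp.single (falsesThenTrues k) r) =
      Finsupp.single (falsesThenTrues (k + m)) r := by
  induction m with
  | zero => simp
  | succ m ih =>
    rw [pow_succ', Module.End.mul_apply, ih, consMap_single, cons_false_falsesThenTrues, add_assoc]

lemma tailMap_pow_single (n k : ℕ) (r : R) :
    (tailMap R false ^ n) (Finsupp.single (falsesThenTrues k) r) =
      if n ≤ k then Finsupp.single (falsesThenTrues (k - n)) r else 0 := by
  induction n generalizing k with
  | zero => simp
  | succ n ih =>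
    rw [pow_succ, Module.End.mul_apply]
    cases k with
    | zero => simp [tailMap_single, Stream'.head, Stream'.get, falsesThenTrues]
    | succ k =>
      rw [← cons_false_falsesThenTrues, tailMap_single]
      simp [Stream'.tail_cons, ih]

lemma consMap_pow_mul_tailMap_pow_single_apply (m n k j : ℕ) :
    (consMap R false ^ m * tailMap R false ^ n) (Finsupp.single (falsesThenTrues k) 1)
      (falsesThenTrues j) = if n ≤ k ∧ k - n + m = j then 1 else 0 := by
  rw [Module.End.mul_apply, tailMap_pow_single]
  split_ifs with h₁ h₂ h₂
  · rw [consMap_pow_single, h₂.2, Finsupp.single_eq_same]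
  · rw [consMap_pow_single, Finsupp.single_eq_of_ne (falsesThenTrues_injective.ne ?_)]
    exact fun h => h₂ ⟨h₁, h.symm⟩
  · exact absurd h₂.1 h₁
  · rw [map_zero, Finsupp.zero_apply]

end

theorem linearIndependent_La_pow_mul_star_La_pow :
    LinearIndependent R fun p : ℕ × ℕ => La R ^ p.1 * star (La R) ^ p.2 := by
  refine linearIndependent_iff.mpr fun l hl => ?_
  suffices ∀ n m, l (m, n) = 0 by ext ⟨m, n⟩; exact this n m
  intro n
  induction n using Nat.strong_induction_on with
  | _ n ih =>
  intro m
  -- the coefficient of `0^m 1^∞` in the image of `0^n 1^∞` only sees `l (m, n)` and `l (·, n' < n)`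
  have h := congr(shiftRep R $hl (Finsupp.single (falsesThenTrues n) 1) (falsesThenTrues m))
  simp only [Finsupp.linearCombination_apply, Finsupp.sum, map_sum, map_smul, map_mul, map_pow,
    shiftRep_La, shiftRep_star_La, LinearMap.sum_apply, LinearMap.smul_apply,
    Finsupp.finsetSum_apply, Finsupp.smul_apply, consMap_pow_mul_tailMap_pow_single_apply,
    map_zero, LinearMap.zero_apply, Finsupp.zero_apply] at h
  rw [Finset.sum_eq_single (m, n)] at h
  · simpa using h
  · rintro ⟨m', n'⟩ _ hne
    rcases lt_or_ge n' n with hlt | hge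
    · simp [ih n' hlt m']
    · simp only [smul_eq_mul, mul_ite, mul_one, mul_zero, ite_eq_right_iff]
      rintro ⟨hle, hm⟩
      exact absurd (Prod.ext (by dsimp only; omega) (by dsimp only; omega)) hne
  · intro hnot; simp [Finsupp.notMem_support_iff.mp hnot]

lemma one_sub_La_mul_star_La : 1 - La R * star (La R) = Lb R * star (Lb R) := by
  rw [← ck_rel R, add_sub_cancel_left]

end L2

-- so that `Bool` instances and lemmas apply to the vertices and edges of `𝒯`
attribute [reducible] toeplitzGraph

namespace Toeplitz

noncomputable def vertexSum : LeavittAmbient toeplitzGraph R :=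
  av toeplitzGraph R false + av toeplitzGraph R true

noncomputable def edgeSum : LeavittAmbient toeplitzGraph R :=
  ae toeplitzGraph R false + ae toeplitzGraph R true

lemma av_false_mul_ae (e : Bool) :
    av toeplitzGraph R false * ae toeplitzGraph R e = ae toeplitzGraph R e :=
  av_src_mul_ae (G := toeplitzGraph) R e

lemma ae_mul_av_self (e : Bool) :
    ae toeplitzGraph R e * av toeplitzGraph R e = ae toeplitzGraph R e :=
  ae_mul_av_rng (G := toeplitzGraph) R e

lemma isIdempotentElem_vertexSum : IsIdempotentElem (vertexSum R) := by
  simp [IsIdempotentElem, vertexSum, add_mul, mul_add, av_mul_av_self, av_mul_av_of_ne]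

lemma star_vertexSum : star (vertexSum R) = vertexSum R := by
  simp [vertexSum]

lemma vertexSum_mul_edgeSum : vertexSum R * edgeSum R = edgeSum R := by
  simp [vertexSum, edgeSum, add_mul, mul_add, av_false_mul_ae, av_mul_ae_of_ne]

lemma edgeSum_mul_av (v : Bool) : edgeSum R * av toeplitzGraph R v = ae toeplitzGraph R v := by
  cases v <;> simp [edgeSum, add_mul, ae_mul_av_self, ae_mul_av_of_ne]

lemma edgeSum_mul_vertexSum : edgeSum R * vertexSum R = edgeSum R := by
  rw [vertexSum, mul_add, edgeSum_mul_av, edgeSum_mul_av, edgeSum]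

lemma star_edgeSum_mul_edgeSum : star (edgeSum R) * edgeSum R = vertexSum R := by
  simp [vertexSum, edgeSum, add_mul, mul_add, ag_mul_ae_self, ag_mul_ae_of_ne]

lemma edgeSum_mul_star_edgeSum : edgeSum R * star (edgeSum R) = av toeplitzGraph R false := by
  have hck := av_eq_sum_ae_mul_ag (G := toeplitzGraph) R false (Set.toFinite _) ⟨false, rfl⟩
  rw [Finset.eq_univ_of_forall fun e => (Set.toFinite _).mem_toFinset.mpr rfl] at hck
  simp [hck, edgeSum, add_mul, mul_add, ae_mul_ag_of_ne, add_comm]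

abbrev Corner := (isIdempotentElem_vertexSum R).Corner

noncomputable def isometry : Corner R :=
  ⟨edgeSum R, (Subsemigroup.mem_corner_iff (isIdempotentElem_vertexSum R)).mpr
    ⟨vertexSum_mul_edgeSum R, edgeSum_mul_vertexSum R⟩⟩

noncomputable def coisometry : Corner R :=
  ⟨star (edgeSum R), (Subsemigroup.mem_corner_iff (isIdempotentElem_vertexSum R)).mpr
    ⟨by rw [← star_vertexSum, ← star_mul, edgeSum_mul_vertexSum],
      by rw [← star_vertexSum, ← star_mul, vertexSum_mul_edgeSum]⟩⟩

lemma coisometry_mul_isometry : coisometry R * isometry R = 1 :=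
  Subtype.ext (star_edgeSum_mul_edgeSum R)

noncomputable def monomial (p : ℕ × ℕ) : LeavittAmbient toeplitzGraph R :=
  Subtype.val (isometry R ^ p.1 * coisometry R ^ p.2)

lemma monomial_zero_zero : monomial R (0, 0) = vertexSum R := by
  rw [monomial, pow_zero, pow_zero, mul_one]
  rfl

lemma monomial_one_zero : monomial R (1, 0) = edgeSum R := by
  rw [monomial, pow_one, pow_zero, mul_one]
  rfl

lemma monomial_zero_one : monomial R (0, 1) = star (edgeSum R) := by
  rw [monomial, pow_one, pow_zero, one_mul]
  rfl

lemma monomial_one_one : monomial R (1, 1) = av toeplitzGraph R false := by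
  rw [monomial, pow_one, pow_one]
  exact edgeSum_mul_star_edgeSum R

lemma monomial_mul_mem (p q : ℕ × ℕ) : monomial R p * monomial R q ∈ Set.range (monomial R) := by
  obtain ⟨r, hr⟩ := mul_mem_range_pow_mul_pow (coisometry_mul_isometry R) p q
  exact ⟨r, congrArg Subtype.val hr⟩

lemma mul_mem_span_monomial {x y : LeavittAmbient toeplitzGraph R}
    (hx : x ∈ Submodule.span R (Set.range (monomial R)))
    (hy : y ∈ Submodule.span R (Set.range (monomial R))) :
    x * y ∈ Submodule.span R (Set.range (monomial R)) := by
  have hxy := Submodule.mul_mem_mul hx hy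
  rw [Submodule.span_mul_span] at hxy
  refine Submodule.span_mono ?_ hxy
  rintro _ ⟨_, ⟨p, rfl⟩, _, ⟨q, rfl⟩, rfl⟩
  exact monomial_mul_mem R p q

lemma mem_span_monomial {x : LeavittAmbient toeplitzGraph R} (hx : x ∈ LPA toeplitzGraph R) :
    x ∈ Submodule.span R (Set.range (monomial R)) := by
  set S := Submodule.span R (Set.range (monomial R))
  have hmono (p : ℕ × ℕ) : monomial R p ∈ S := Submodule.subset_span ⟨p, rfl⟩
  have hav (v : Bool) : av toeplitzGraph R v ∈ S := by
    cases v
    · exact monomial_one_one R ▸ hmono (1, 1)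
    · have hv : av toeplitzGraph R true = monomial R (0, 0) - monomial R (1, 1) := by
        rw [monomial_zero_zero, monomial_one_one, vertexSum, add_sub_cancel_left]
      exact hv ▸ sub_mem (hmono _) (hmono _)
  refine NonUnitalAlgebra.adjoin_le
    (S := S.toNonUnitalSubalgebra fun _ _ => mul_mem_span_monomial R) ?_ hx
  rintro _ ((⟨v, rfl⟩ | ⟨e, rfl⟩) | ⟨e, rfl⟩)
  · exact hav v
  · rw [← edgeSum_mul_av, ← monomial_one_zero]
    exact mul_mem_span_monomial R (hmono _) (hav e)
  · rw [← star_ae, ← edgeSum_mul_av, star_mul, star_av, ← monomial_zero_one]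
    exact mul_mem_span_monomial R (hav e) (hmono _)

section Lift

variable {A : Type*} [Ring A] [Algebra R A] {s t : A}

def vertexImage (t s : A) (v : Bool) : A := cond v (1 - t * s) (t * s)

lemma orthogonalIdempotents_vertexImage (h : s * t = 1) :
    OrthogonalIdempotents (vertexImage t s) := by
  have hts : IsIdempotentElem (t * s) := by
    rw [IsIdempotentElem, mul_assoc, ← mul_assoc s, h, one_mul]
  refine ⟨fun v => ?_, fun v w hvw => ?_⟩
  · cases v
    · exact hts
    · exact hts.one_sub
  · cases v <;> cases w <;> simp_all [vertexImage, mul_sub, sub_mul, hts.eq]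

lemma vertexImage_false_add_true : vertexImage t s false + vertexImage t s true = 1 :=
  add_sub_cancel _ _

lemma vertexImage_false_mul (h : s * t = 1) : vertexImage t s false * t = t := by
  rw [vertexImage, cond_false, mul_assoc, h, mul_one]

lemma mul_vertexImage_false (h : s * t = 1) : s * vertexImage t s false = s := by
  rw [vertexImage, cond_false, ← mul_assoc, h, one_mul]

def genImage (t s : A) : LGen toeplitzGraph → A
  | .vert v => vertexImage t s v
  | .edge e => t * vertexImage t s e
  | .ghost e => vertexImage t s e * s

noncomputable def lift (h : s * t = 1) : LeavittAmbient toeplitzGraph R →ₐ[R] A :=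
  RingQuot.liftAlgHom R ⟨FreeAlgebra.lift R (genImage t s), fun _ _ r => by
    have hP := orthogonalIdempotents_vertexImage h
    induction r with
    | vert_self v => simpa [genImage] using (hP.idem v).eq
    | vert_ne hvw => simpa [genImage] using hP.ortho hvw
    | src_edge e => simp [genImage, ← mul_assoc, vertexImage_false_mul h]
    | edge_rng e => simp [genImage, mul_assoc, (hP.idem e).eq]
    | rng_ghost e => simp [genImage, ← mul_assoc, (hP.idem e).eq]
    | ghost_src e => simp [genImage, mul_assoc, mul_vertexImage_false h]
    | ghost_edge_self e => simpa [genImage, mul_assoc, ← mul_assoc s, h] using (hP.idem e).eq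
    | ghost_edge_ne hef => simpa [genImage, mul_assoc, ← mul_assoc s, h] using hP.ortho hef
    | cuntz_krieger v hfin hne =>
        obtain ⟨e, rfl⟩ := hne
        have huniv : hfin.toFinset = Finset.univ :=
          Finset.eq_univ_of_forall fun _ => hfin.mem_toFinset.mpr rfl
        have hterm (c : Bool) : t * vertexImage t s c * (vertexImage t s c * s) =
            t * vertexImage t s c * s := by
          rw [mul_assoc, ← mul_assoc (vertexImage t s c) _ s, (hP.idem c).eq, ← mul_assoc]
        rw [huniv]
        simp only [Fintype.sum_bool, map_add, map_mul, FreeAlgebra.lift_ι_apply, genImage, hterm]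
        rw [← add_mul, ← mul_add, add_comm, vertexImage_false_add_true, mul_one]
        rfl⟩

lemma lift_mkAlgHom_ι (h : s * t = 1) (g : LGen toeplitzGraph) :
    lift R h (RingQuot.mkAlgHom R (LeavittRel toeplitzGraph R) (ι R g)) = genImage t s g := by
  rw [lift, RingQuot.liftAlgHom_mkAlgHom_apply, FreeAlgebra.lift_ι_apply]

lemma lift_av (h : s * t = 1) (v : Bool) : lift R h (av toeplitzGraph R v) = vertexImage t s v :=
  lift_mkAlgHom_ι R h _

lemma lift_ae (h : s * t = 1) (e : Bool) :
    lift R h (ae toeplitzGraph R e) = t * vertexImage t s e :=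
  lift_mkAlgHom_ι R h _

lemma lift_ag (h : s * t = 1) (e : Bool) :
    lift R h (ag toeplitzGraph R e) = vertexImage t s e * s :=
  lift_mkAlgHom_ι R h _

lemma lift_vertexSum (h : s * t = 1) : lift R h (vertexSum R) = 1 := by
  rw [vertexSum, map_add, lift_av, lift_av, vertexImage_false_add_true]

lemma lift_edgeSum (h : s * t = 1) : lift R h (edgeSum R) = t := by
  rw [edgeSum, map_add, lift_ae, lift_ae, ← mul_add, vertexImage_false_add_true, mul_one]

lemma lift_star_edgeSum (h : s * t = 1) : lift R h (star (edgeSum R)) = s := by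
  rw [edgeSum, star_add, star_ae, star_ae, map_add, lift_ag, lift_ag, ← add_mul,
    vertexImage_false_add_true, one_mul]

lemma lift_monomial (h : s * t = 1) (p : ℕ × ℕ) :
    lift R h (monomial R p) = t ^ p.1 * s ^ p.2 := by
  let F := (isIdempotentElem_vertexSum R).cornerMonoidHom (lift R h : _ →ₙ* A)
    (lift_vertexSum R h)
  change F (isometry R ^ p.1 * coisometry R ^ p.2) = t ^ p.1 * s ^ p.2
  rw [map_mul, map_pow, map_pow]
  exact congrArg₂ (· ^ p.1 * · ^ p.2) (lift_edgeSum R h) (lift_star_edgeSum R h)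

lemma star_vertexImage [StarRing A] (v : Bool) :
    star (vertexImage t (star t) v) = vertexImage t (star t) v := by
  cases v <;> simp [vertexImage]

lemma genImage_starGen [StarRing A] (g : LGen toeplitzGraph) :
    genImage t (star t) (starGen toeplitzGraph g) = star (genImage t (star t) g) := by
  cases g <;> simp [genImage, starGen, star_vertexImage]

end Lift

lemma lift_star (x : LeavittAmbient toeplitzGraph R) :
    lift R (L2.astar_a R) (star x) = star (lift R (L2.astar_a R) x) := by
  have hcomm : (AlgHom.op (lift R (L2.astar_a R))).comp (LPGraph.starMapAux toeplitzGraph R) =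
      (L2.starMapAux R).comp (lift R (L2.astar_a R)) := by
    ext g
    simp only [Function.comp_apply, AlgHom.comp_apply, LPGraph.starMapAux_gen,
      AlgHom.op_apply_apply, MulOpposite.unop_op, lift_mkAlgHom_ι, genImage_starGen]
    rw [L2.star_def, MulOpposite.op_unop]
  exact congrArg MulOpposite.unop (AlgHom.congr_fun hcomm x)

noncomputable def starLift : LeavittAmbient toeplitzGraph R →⋆ₐ[R] L2 R :=
  { lift R (L2.astar_a R) with map_star' := lift_star R }

theorem injOn_lift_span_monomial :
    Set.InjOn (lift R (L2.astar_a R)) (Submodule.span R (Set.range (monomial R))) := by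
  refine LinearIndependent.injOn_span_of_comp (lift R (L2.astar_a R)).toLinearMap ?_
  have hcomp : ⇑(lift R (L2.astar_a R)).toLinearMap ∘ monomial R =
      fun p => La R ^ p.1 * star (La R) ^ p.2 :=
    funext (lift_monomial R (L2.astar_a R))
  exact hcomp ▸ L2.linearIndependent_La_pow_mul_star_La_pow R

end Toeplitz

/-- The assignment `u ↦ aa*`, `v ↦ bb*`, `e ↦ aaa*`, `f ↦ abb*` extends to a unital
injective `*`-algebra homomorphism `L_R(𝒯) → L_{2,R}`. -/
theorem toeplitz_embeds_into_l2
    (R : Type) [CommRing R] :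
    ∃ φ : LPA toeplitzGraph R →⋆ₙₐ[R] L2 R,
      φ (lv toeplitzGraph R false) = La R * star (La R) ∧
      φ (lv toeplitzGraph R true) = Lb R * star (Lb R) ∧
      φ (le toeplitzGraph R false) = La R * La R * star (La R) ∧
      φ (le toeplitzGraph R true) = La R * Lb R * star (Lb R) ∧
      φ (lv toeplitzGraph R false + lv toeplitzGraph R true) = 1 ∧
      Function.Injective φ := by
  have h := L2.astar_a R
  refine ⟨(Toeplitz.starLift R).toNonUnitalStarAlgHom.comp
    (NonUnitalStarSubalgebraClass.subtype (LPA toeplitzGraph R)), ?_, ?_, ?_, ?_, ?_, ?_⟩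
  · exact Toeplitz.lift_av R h false
  · exact (Toeplitz.lift_av R h true).trans (L2.one_sub_La_mul_star_La R)
  · exact (Toeplitz.lift_ae R h false).trans (mul_assoc _ _ _).symm
  · exact (Toeplitz.lift_ae R h true).trans
      ((congrArg _ (L2.one_sub_La_mul_star_La R)).trans (mul_assoc _ _ _).symm)
  · exact Toeplitz.lift_vertexSum R h
  · intro x y hxy
    exact Subtype.ext (Toeplitz.injOn_lift_span_monomial R (Toeplitz.mem_span_monomial R x.2)
      (Toeplitz.mem_span_monomial R y.2) hxy)
end
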